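/- Let V be a finite set and for each v ∈ V let φ_v ∈ ℂ^V be a unit vector. Define T : ℂ^V → ℂ^V ⊗ ℂ^V by T = ∑_{v ∈ V} (e_v ⊗ φ_v)⟨e_v|, let S be the swap operator on ℂ^V ⊗ ℂ^V (S(e_v ⊗ e_w) = e_w ⊗ e_v), let U = (2 T T† − I) S, and let M = T† S T. Then: (1) T† T = I, hence U is unitary, and M is self-adjoint with ‖M‖ ≤ 1 and entries ⟨e_v, M e_w⟩ = ⟨φ_v, e_w⟩⟨e_v, φ_w⟩. (2) If α, α' are orthogonal eigenvectors of M, then the subspaces R_α = span{T α, S T α} and R_{α'} = span{T α', S T α'} are orthogonal. (3) For an orthonormal eigenbasis (α) of M, U acts as −S on the orthogonal complement of ⊕_α R_α. (4) If M α = ρ α with ρ real and |ρ| < 1, then the vectors |α,±⟩ = (I − (ρ ∓ i√(1 − ρ²)) S) T α are nonzero eigenvectors of U with eigenvalues ρ ± i√(1 − ρ²), and R_α is two-dimensional. (5) If M α = ρ α with ρ ∈ {1, −1}, then S T α = ρ T α, so R_α is one-dimensional and T α is an eigenvector of U with eigenvalue ρ. -/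

import Mathlib

open Matrix

noncomputable def specNorm {ι : Type} [Fintype ι] [DecidableEq ι] {𝕜 : Type} [RCLike 𝕜]
    (M : Matrix ι ι 𝕜) : ℝ :=
  ‖LinearMap.toContinuousLinearMap (Matrix.toEuclideanLin M)‖

/-- The standard Hermitian inner product `⟨x, y⟩ = ∑ i, conj (x i) * y i`. -/
noncomputable def dotc {ι : Type} [Fintype ι] (x y : ι → ℂ) : ℂ :=
  ∑ i, starRingEnd ℂ (x i) * y i

/-- Squared Euclidean norm. -/
noncomputable def norm2 {ι : Type} [Fintype ι] (x : ι → ℂ) : ℝ := ∑ i, ‖x i‖ ^ 2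

section Szegedy

variable {V : Type} [Fintype V] [DecidableEq V]

/-- The isometry `T = ∑_v (e_v ⊗ φ_v)⟨e_v|`, identifying `ℂ^V ⊗ ℂ^V` with `ℂ^(V × V)`. -/
def szT (φ : V → V → ℂ) : Matrix (V × V) V ℂ :=
  Matrix.of fun p v => if p.1 = v then φ v p.2 else 0

/-- The swap operator `S` on `ℂ^V ⊗ ℂ^V ≅ ℂ^(V × V)`. -/
def szS (V : Type) [Fintype V] [DecidableEq V] : Matrix (V × V) (V × V) ℂ :=
  Matrix.of fun p q => if p.1 = q.2 ∧ p.2 = q.1 then 1 else 0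

/-- The quantum walk unitary `U = (2 T T† − I) S`. -/
noncomputable def szU (φ : V → V → ℂ) : Matrix (V × V) (V × V) ℂ :=
  ((2 : ℂ) • (szT φ * (szT φ)ᴴ) - 1) * szS V

/-- The discriminant matrix `M = T† S T`. -/
noncomputable def szM (φ : V → V → ℂ) : Matrix V V ℂ :=
  (szT φ)ᴴ * szS V * szT φ

/-- The candidate eigenvector `|α,+⟩ = (I − (ρ − i√(1−ρ²)) S) Tα`. -/
noncomputable def szVecPlus (φ : V → V → ℂ) (α : V → ℂ) (ρ : ℝ) : V × V → ℂ :=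
  (szT φ).mulVec α -
    ((ρ : ℂ) - Complex.I * (Real.sqrt (1 - ρ ^ 2) : ℂ)) • (szS V).mulVec ((szT φ).mulVec α)

/-- The candidate eigenvector `|α,−⟩ = (I − (ρ + i√(1−ρ²)) S) Tα`. -/
noncomputable def szVecMinus (φ : V → V → ℂ) (α : V → ℂ) (ρ : ℝ) : V × V → ℂ :=
  (szT φ).mulVec α -
    ((ρ : ℂ) + Complex.I * (Real.sqrt (1 - ρ ^ 2) : ℂ)) • (szS V).mulVec ((szT φ).mulVec α)

end Szegedy

/-!
Apart from the entry formula for `M`, the argument only uses that `T` is an isometry and `S` a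
self-adjoint involution, and it is carried out for any such pair. Then `2TT† − I` is a reflection,
so `U` is a product of two unitaries, and `M = T†ST` is a compression of the unitary `S`, so
`‖M‖ ≤ 1`. If `Mα = ρα`, then `U` sends `Tα ↦ 2ρ Tα − STα` and `STα ↦ Tα`, so it preserves
`span{Tα, STα}` and acts there with characteristic polynomial `t² − 2ρt + 1`, whose roots are
`ρ ± i√(1 − ρ²)`. The Gram matrix of `(Tα, STα)` is `[[1, ρ], [ρ, 1]]`: it is nonsingular when
`|ρ| < 1` and forces `STα = ρ Tα` when `ρ = ±1`. A vector orthogonal to every `STα` is killed by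
`T†S`, so `U = 2TT†S − S` acts on it as `−S`.
-/

section Dotc

variable {n : Type} [Fintype n]

lemma dotc_eq_star_dotProduct (x y : n → ℂ) : dotc x y = star x ⬝ᵥ y := rfl

@[simp] lemma dotc_add_left (x y z : n → ℂ) : dotc (x + y) z = dotc x z + dotc y z := by
  simp [dotc_eq_star_dotProduct]

@[simp] lemma dotc_add_right (x y z : n → ℂ) : dotc x (y + z) = dotc x y + dotc x z := by
  simp [dotc_eq_star_dotProduct]

@[simp] lemma dotc_sub_left (x y z : n → ℂ) : dotc (x - y) z = dotc x z - dotc y z := by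
  simp [dotc_eq_star_dotProduct]

@[simp] lemma dotc_sub_right (x y z : n → ℂ) : dotc x (y - z) = dotc x y - dotc x z := by
  simp [dotc_eq_star_dotProduct]

@[simp] lemma dotc_smul_left (c : ℂ) (x y : n → ℂ) :
    dotc (c • x) y = starRingEnd ℂ c * dotc x y := by
  simp [dotc_eq_star_dotProduct]

@[simp] lemma dotc_smul_right (c : ℂ) (x y : n → ℂ) : dotc x (c • y) = c * dotc x y := by
  simp [dotc_eq_star_dotProduct]

@[simp] lemma dotc_zero_left (y : n → ℂ) : dotc 0 y = 0 := by
  simp [dotc_eq_star_dotProduct]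

@[simp] lemma dotc_zero_right (x : n → ℂ) : dotc x 0 = 0 := by
  simp [dotc_eq_star_dotProduct]

open scoped ComplexOrder in
lemma dotc_self_eq_zero {x : n → ℂ} : dotc x x = 0 ↔ x = 0 :=
  dotProduct_star_self_eq_zero

lemma dotc_mulVec_left {m : Type} [Fintype m] (A : Matrix m n ℂ) (x : n → ℂ) (y : m → ℂ) :
    dotc (A *ᵥ x) y = dotc x (Aᴴ *ᵥ y) := by
  simp only [dotc_eq_star_dotProduct, star_mulVec, dotProduct_mulVec]

lemma dotc_eq_zero_of_mem_span_pair {x y x' y' u u' : n → ℂ}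
    (hxx : dotc x x' = 0) (hxy : dotc x y' = 0) (hyx : dotc y x' = 0) (hyy : dotc y y' = 0)
    (hu : u ∈ Submodule.span ℂ ({x, y} : Set (n → ℂ)))
    (hu' : u' ∈ Submodule.span ℂ ({x', y'} : Set (n → ℂ))) : dotc u u' = 0 := by
  obtain ⟨a, b, rfl⟩ := Submodule.mem_span_pair.mp hu
  obtain ⟨a', b', rfl⟩ := Submodule.mem_span_pair.mp hu'
  simp [hxx, hxy, hyx, hyy]

lemma eq_zero_of_forall_dotc_eq_zero {ι : Type} {b : ι → n → ℂ} {x : n → ℂ}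
    (hx : x ∈ Submodule.span ℂ (Set.range b)) (h : ∀ i, dotc (b i) x = 0) : x = 0 := by
  have hperp : ∀ y ∈ Submodule.span ℂ (Set.range b), dotc y x = 0 := by
    intro y hy
    induction hy using Submodule.span_induction with
    | mem _ hy => obtain ⟨i, rfl⟩ := hy; exact h i
    | zero => exact dotc_zero_left x
    | add _ _ _ _ hy hz => rw [dotc_add_left, hy, hz, add_zero]
    | smul _ _ _ hy => rw [dotc_smul_left, hy, mul_zero]
  exact dotc_self_eq_zero.mp (hperp x hx)

variable {x y : n → ℂ} {c : ℂ}

lemma linearIndependent_pair_of_dotc (hx : dotc x x = 1) (hy : dotc y y = 1)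
    (hxy : dotc x y = c) (hyx : dotc y x = c) (hc : c ^ 2 ≠ 1) :
    LinearIndependent ℂ ![x, y] := by
  refine LinearIndependent.pair_iff.mpr fun a b hab => ?_
  have ex : a + b * c = 0 := by
    simpa [hx, hxy] using congr_arg (dotc x) hab
  have ey : a * c + b = 0 := by
    simpa [hy, hyx] using congr_arg (dotc y) hab
  have ha : a = 0 := by
    have : a * (1 - c ^ 2) = 0 := by linear_combination ex - c * ey
    exact (mul_eq_zero.mp this).resolve_right (sub_ne_zero.mpr hc.symm)
  exact ⟨ha, by simpa [ha] using ey⟩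

lemma eq_smul_of_dotc (hx : dotc x x = 1) (hy : dotc y y = 1)
    (hxy : dotc x y = c) (hyx : dotc y x = c) (hc : c ^ 2 = 1) : y = c • x := by
  rw [← sub_eq_zero, ← dotc_self_eq_zero]
  simp only [dotc_sub_left, dotc_sub_right, dotc_smul_left, dotc_smul_right, hx, hy, hxy, hyx]
  linear_combination -hc

end Dotc

section LinearAlgebra

variable {K W : Type} [Field K] [AddCommGroup W] [Module K W]

lemma finrank_span_pair_eq_two {x y : W} (h : LinearIndependent K ![x, y]) :
    Module.finrank K (Submodule.span K ({x, y} : Set W)) = 2 := by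
  rw [← Matrix.range_cons_cons_empty x y ![], finrank_span_eq_card h, Fintype.card_fin]

lemma finrank_span_pair_smul_eq_one {x : W} (hx : x ≠ 0) (c : K) :
    Module.finrank K (Submodule.span K ({x, c • x} : Set W)) = 1 := by
  rw [Set.pair_comm, Submodule.span_insert_eq_span
    (Submodule.smul_mem _ c (Submodule.mem_span_singleton_self x)), finrank_span_singleton hx]

lemma sub_smul_ne_zero_of_linearIndependent {x y : W} (h : LinearIndependent K ![x, y])
    (c : K) : x - c • y ≠ 0 := by
  intro h0
  have := LinearIndependent.pair_iff.mp h 1 (-c) (by rw [one_smul, neg_smul, ← sub_eq_add_neg, h0])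
  exact one_ne_zero this.1

end LinearAlgebra

section SzegedyWalk

variable {n m : Type} [Fintype n] [Fintype m]

noncomputable def szegedyWalk [DecidableEq m] (T : Matrix m n ℂ) (S : Matrix m m ℂ) :
    Matrix m m ℂ :=
  ((2 : ℂ) • (T * Tᴴ) - 1) * S

def szegedyDiscriminant (T : Matrix m n ℂ) (S : Matrix m m ℂ) : Matrix n n ℂ :=
  Tᴴ * S * T

lemma mem_unitaryGroup_of_conjTranspose_eq_of_mul_self [DecidableEq m] {A : Matrix m m ℂ}
    (hA : Aᴴ = A) (hA2 : A * A = 1) : A ∈ unitaryGroup m ℂ :=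
  mem_unitaryGroup_iff.mpr (by rw [star_eq_conjTranspose, hA, hA2])

open scoped Matrix.Norms.L2Operator in
lemma l2_opNorm_le_one_of_conjTranspose_mul_self_eq_one [DecidableEq n]
    {A : Matrix m n ℂ} (hA : Aᴴ * A = 1) : ‖A‖ ≤ 1 := by
  have h1 : ‖(1 : Matrix n n ℂ)‖ ≤ 1 := by
    rw [← l2_opNorm_toEuclideanCLM, map_one]
    exact ContinuousLinearMap.norm_id_le
  have : ‖A‖ * ‖A‖ ≤ 1 := by rwa [← l2_opNorm_conjTranspose_mul_self, hA]
  nlinarith [norm_nonneg A]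

variable {T : Matrix m n ℂ} {S : Matrix m m ℂ}

lemma szegedyWalk_mem_unitaryGroup [DecidableEq m] [DecidableEq n] (hT : Tᴴ * T = 1)
    (hS : Sᴴ = S) (hS2 : S * S = 1) : szegedyWalk T S ∈ unitaryGroup m ℂ := by
  have hP : T * Tᴴ * (T * Tᴴ) = T * Tᴴ := by
    rw [Matrix.mul_assoc, ← Matrix.mul_assoc Tᴴ, hT, Matrix.one_mul]
  refine Submonoid.mul_mem _ (mem_unitaryGroup_of_conjTranspose_eq_of_mul_self ?_ ?_)
    (mem_unitaryGroup_of_conjTranspose_eq_of_mul_self hS hS2)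
  · simp [conjTranspose_sub]
  · simp only [Matrix.sub_mul, Matrix.mul_sub, Matrix.smul_mul, Matrix.mul_smul, hP,
      Matrix.one_mul, Matrix.mul_one]
    module

omit [Fintype n] in
lemma szegedyDiscriminant_isHermitian (hS : Sᴴ = S) :
    (szegedyDiscriminant T S).IsHermitian := by
  simp [szegedyDiscriminant, IsHermitian, conjTranspose_mul, hS, Matrix.mul_assoc]

open scoped Matrix.Norms.L2Operator in
lemma specNorm_szegedyDiscriminant_le_one [DecidableEq m] [DecidableEq n]
    (hT : Tᴴ * T = 1) (hS : Sᴴ = S) (hS2 : S * S = 1) :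
    specNorm (szegedyDiscriminant T S) ≤ 1 := by
  have hT1 := l2_opNorm_le_one_of_conjTranspose_mul_self_eq_one hT
  have hS1 := l2_opNorm_le_one_of_conjTranspose_mul_self_eq_one (by rw [hS, hS2] : Sᴴ * S = 1)
  calc specNorm (szegedyDiscriminant T S) = ‖Tᴴ * S * T‖ := rfl
    _ ≤ ‖Tᴴ‖ * ‖S‖ * ‖T‖ :=
      (l2_opNorm_mul _ _).trans (by gcongr; exact l2_opNorm_mul _ _)
    _ ≤ 1 := by
      rw [l2_opNorm_conjTranspose]
      exact mul_le_one₀ (mul_le_one₀ hT1 (norm_nonneg _) hS1) (norm_nonneg _) hT1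

lemma dotc_mulVec_mulVec_of_conjTranspose_mul_self [DecidableEq n]
    (hT : Tᴴ * T = 1) (x y : n → ℂ) : dotc (T *ᵥ x) (T *ᵥ y) = dotc x y := by
  rw [dotc_mulVec_left, mulVec_mulVec, hT, one_mulVec]

lemma dotc_mulVec_left_of_conjTranspose_eq (hS : Sᴴ = S) (x y : m → ℂ) :
    dotc (S *ᵥ x) y = dotc x (S *ᵥ y) := by
  rw [dotc_mulVec_left, hS]

lemma szegedyDiscriminant_mulVec (x : n → ℂ) :
    szegedyDiscriminant T S *ᵥ x = Tᴴ *ᵥ S *ᵥ T *ᵥ x := by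
  simp only [szegedyDiscriminant, mulVec_mulVec, Matrix.mul_assoc]

lemma dotc_mulVec_mulVec_eq_dotc_szegedyDiscriminant (x y : n → ℂ) :
    dotc (T *ᵥ x) (S *ᵥ T *ᵥ y) = dotc x (szegedyDiscriminant T S *ᵥ y) := by
  rw [dotc_mulVec_left, szegedyDiscriminant_mulVec]

lemma szegedyWalk_mulVec [DecidableEq m] (x : m → ℂ) :
    szegedyWalk T S *ᵥ x = (2 : ℂ) • T *ᵥ Tᴴ *ᵥ S *ᵥ x - S *ᵥ x := by
  rw [szegedyWalk, ← mulVec_mulVec, sub_mulVec, smul_mulVec, one_mulVec, ← mulVec_mulVec]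

lemma szegedyWalk_mulVec_mulVec [DecidableEq m] {α : n → ℂ} {ρ : ℂ}
    (hα : szegedyDiscriminant T S *ᵥ α = ρ • α) :
    szegedyWalk T S *ᵥ T *ᵥ α = (2 * ρ) • T *ᵥ α - S *ᵥ T *ᵥ α := by
  rw [szegedyWalk_mulVec, ← szegedyDiscriminant_mulVec, hα, mulVec_smul, smul_smul]

lemma szegedyWalk_mulVec_mulVec_of_eq_smul [DecidableEq m] {α : n → ℂ} {ρ : ℂ}
    (hα : szegedyDiscriminant T S *ᵥ α = ρ • α) (hST : S *ᵥ T *ᵥ α = ρ • T *ᵥ α) :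
    szegedyWalk T S *ᵥ T *ᵥ α = ρ • T *ᵥ α := by
  rw [szegedyWalk_mulVec_mulVec hα, hST, two_mul, add_smul, add_sub_cancel_right]

lemma szegedyWalk_mulVec_mulVec_mulVec [DecidableEq m] [DecidableEq n] (hT : Tᴴ * T = 1)
    (hS2 : S * S = 1) (α : n → ℂ) : szegedyWalk T S *ᵥ S *ᵥ T *ᵥ α = T *ᵥ α := by
  rw [szegedyWalk_mulVec, mulVec_mulVec (M := S), hS2, one_mulVec, mulVec_mulVec (M := Tᴴ), hT,
    one_mulVec, two_smul, add_sub_cancel_right]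

lemma mulVec_sub_smul_eq_smul {R : Type} [CommRing R] {A : Matrix m m R} {x y : m → R} {a b : R}
    (hx : A *ᵥ x = (a + b) • x - y) (hy : A *ᵥ y = x) (hab : a * b = 1) :
    A *ᵥ (x - b • y) = a • (x - b • y) := by
  rw [mulVec_sub, mulVec_smul, hx, hy, smul_sub, smul_smul, hab, one_smul]
  module

lemma szegedyWalk_mulVec_sub_smul [DecidableEq m] [DecidableEq n] (hT : Tᴴ * T = 1)
    (hS2 : S * S = 1) {α : n → ℂ} {ρ a b : ℂ} (hα : szegedyDiscriminant T S *ᵥ α = ρ • α)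
    (hsum : a + b = 2 * ρ) (hprod : a * b = 1) :
    szegedyWalk T S *ᵥ (T *ᵥ α - b • S *ᵥ T *ᵥ α) = a • (T *ᵥ α - b • S *ᵥ T *ᵥ α) :=
  mulVec_sub_smul_eq_smul (by rw [szegedyWalk_mulVec_mulVec hα, hsum])
    (szegedyWalk_mulVec_mulVec_mulVec hT hS2 α) hprod

lemma szegedyWalk_mulVec_eq_neg_of_orthogonal [DecidableEq m] (hS : Sᴴ = S) {ι : Type}
    {b : ι → n → ℂ} (hb : ∀ x, x ∈ Submodule.span ℂ (Set.range b)) {ψ : m → ℂ}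
    (hψ : ∀ i, dotc (S *ᵥ T *ᵥ b i) ψ = 0) : szegedyWalk T S *ᵥ ψ = -(S *ᵥ ψ) := by
  have h : Tᴴ *ᵥ S *ᵥ ψ = 0 := eq_zero_of_forall_dotc_eq_zero (hb _) fun i => by
    rw [← dotc_mulVec_left, ← dotc_mulVec_left_of_conjTranspose_eq hS, hψ]
  rw [szegedyWalk_mulVec, h, mulVec_zero, smul_zero, zero_sub]

lemma dotc_eq_zero_of_mem_span_szegedy [DecidableEq m] [DecidableEq n] (hT : Tᴴ * T = 1)
    (hS : Sᴴ = S) (hS2 : S * S = 1) {α α' : n → ℂ} {ρ' : ℂ}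
    (hα' : szegedyDiscriminant T S *ᵥ α' = ρ' • α') (h : dotc α α' = 0) {u u' : m → ℂ}
    (hu : u ∈ Submodule.span ℂ ({T *ᵥ α, S *ᵥ T *ᵥ α} : Set (m → ℂ)))
    (hu' : u' ∈ Submodule.span ℂ ({T *ᵥ α', S *ᵥ T *ᵥ α'} : Set (m → ℂ))) :
    dotc u u' = 0 := by
  have hTT : dotc (T *ᵥ α) (T *ᵥ α') = 0 := by
    rw [dotc_mulVec_mulVec_of_conjTranspose_mul_self hT, h]
  have hTST : dotc (T *ᵥ α) (S *ᵥ T *ᵥ α') = 0 := by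
    rw [dotc_mulVec_mulVec_eq_dotc_szegedyDiscriminant, hα', dotc_smul_right, h, mul_zero]
  refine dotc_eq_zero_of_mem_span_pair hTT hTST ?_ ?_ hu hu'
  · rwa [dotc_mulVec_left_of_conjTranspose_eq hS]
  · rwa [dotc_mulVec_mulVec_of_conjTranspose_mul_self (by rw [hS, hS2])]

lemma szegedy_gram [DecidableEq m] [DecidableEq n] (hT : Tᴴ * T = 1) (hS : Sᴴ = S)
    (hS2 : S * S = 1) {α : n → ℂ} {ρ : ℂ} (hα : szegedyDiscriminant T S *ᵥ α = ρ • α)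
    (hn : dotc α α = 1) :
    dotc (T *ᵥ α) (T *ᵥ α) = 1 ∧ dotc (S *ᵥ T *ᵥ α) (S *ᵥ T *ᵥ α) = 1 ∧
      dotc (T *ᵥ α) (S *ᵥ T *ᵥ α) = ρ ∧ dotc (S *ᵥ T *ᵥ α) (T *ᵥ α) = ρ := by
  have hTST : dotc (T *ᵥ α) (S *ᵥ T *ᵥ α) = ρ := by
    rw [dotc_mulVec_mulVec_eq_dotc_szegedyDiscriminant, hα, dotc_smul_right, hn, mul_one]
  refine ⟨?_, ?_, hTST, by rwa [dotc_mulVec_left_of_conjTranspose_eq hS]⟩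
  · rw [dotc_mulVec_mulVec_of_conjTranspose_mul_self hT, hn]
  · rw [dotc_mulVec_mulVec_of_conjTranspose_mul_self (by rw [hS, hS2]),
      dotc_mulVec_mulVec_of_conjTranspose_mul_self hT, hn]

end SzegedyWalk

lemma add_I_mul_sqrt_mul_sub_I_mul_sqrt {ρ : ℝ} (hρ : ρ ^ 2 ≤ 1) :
    ((ρ : ℂ) + Complex.I * (√(1 - ρ ^ 2) : ℂ)) * ((ρ : ℂ) - Complex.I * (√(1 - ρ ^ 2) : ℂ))
      = 1 := by
  have hs : ((√(1 - ρ ^ 2) : ℝ) : ℂ) ^ 2 = 1 - (ρ : ℂ) ^ 2 := by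
    rw [← Complex.ofReal_pow, Real.sq_sqrt (by linarith)]; push_cast; ring
  linear_combination (-(√(1 - ρ ^ 2) : ℂ) ^ 2) * Complex.I_sq + hs

section Szegedy

variable {V : Type} [Fintype V] [DecidableEq V]

lemma szS_conjTranspose : (szS V)ᴴ = szS V := by
  ext p q
  simp [szS, and_comm, eq_comm]

lemma szS_mul_self : szS V * szS V = 1 := by
  ext ⟨a, b⟩ ⟨c, d⟩
  simp [szS, Matrix.mul_apply, Matrix.one_apply, Fintype.sum_prod_type, ite_and, Prod.ext_iff]

lemma szT_conjTranspose_mul_self {φ : V → V → ℂ} (hφ : ∀ v, ∑ w, ‖φ v w‖ ^ 2 = 1) :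
    (szT φ)ᴴ * szT φ = 1 := by
  ext v w
  rcases eq_or_ne w v with rfl | hwv
  · simp [szT, Matrix.mul_apply, Fintype.sum_prod_type, Complex.conj_mul', ← Complex.ofReal_pow,
      ← Complex.ofReal_sum, hφ]
  · simp [szT, Matrix.mul_apply, Fintype.sum_prod_type, hwv, hwv.symm]

lemma szM_apply (φ : V → V → ℂ) (v w : V) : szM φ v w = starRingEnd ℂ (φ v w) * φ w v := by
  simp [szM, szT, szS, Matrix.mul_apply, Fintype.sum_prod_type, ite_and,
    apply_ite (starRingEnd ℂ)]

end Szegedy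

/-- Szegedy correspondence.  For unit vectors `φ_v ∈ ℂ^V`, with
`T = ∑_v (e_v ⊗ φ_v)⟨e_v|`, `S` the swap, `U = (2TT† − I)S` and `M = T†ST`:
(1) `T†T = I`, `U` is unitary, `M` is self-adjoint with `‖M‖ ≤ 1` and entries
`⟨e_v, M e_w⟩ = ⟨φ_v, e_w⟩⟨e_v, φ_w⟩`;
(2) for orthogonal eigenvectors `α, α'` of `M`, the subspaces `span{Tα, STα}` and
`span{Tα', STα'}` are orthogonal;
(3) for an orthonormal eigenbasis `(b i)` of `M`, `U` acts as `−S` on the orthogonal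
complement of the sum of the subspaces `span{T(b i), ST(b i)}`;
(4) if `Mα = ρα` with `α` a unit vector, `ρ` real, `|ρ| < 1`, then
`|α,±⟩ = (I − (ρ ∓ i√(1−ρ²))S)Tα` are nonzero eigenvectors of `U` with eigenvalues
`ρ ± i√(1−ρ²)`, and `span{Tα, STα}` is two-dimensional;
(5) if `Mα = ρα` with `α` a unit vector and `ρ ∈ {1, −1}`, then `STα = ρTα`,
`span{Tα, STα}` is one-dimensional, and `U(Tα) = ρ Tα`. -/
theorem szegedy_spectral_correspondence
    {V : Type} [Fintype V] [DecidableEq V]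
    (φ : V → V → ℂ) (hφ : ∀ v, ∑ w, ‖φ v w‖ ^ 2 = 1) :
    -- (1)
    ((szT φ)ᴴ * szT φ = 1) ∧
    szU φ ∈ Matrix.unitaryGroup (V × V) ℂ ∧
    (szM φ).IsHermitian ∧
    specNorm (szM φ) ≤ 1 ∧
    (∀ v w : V, szM φ v w = starRingEnd ℂ (φ v w) * φ w v) ∧
    -- (2)
    (∀ (α α' : V → ℂ) (ρ ρ' : ℂ),
      (szM φ).mulVec α = ρ • α → (szM φ).mulVec α' = ρ' • α' → dotc α α' = 0 →
      ∀ u ∈ Submodule.span ℂ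
        ({(szT φ).mulVec α, (szS V).mulVec ((szT φ).mulVec α)} : Set (V × V → ℂ)),
      ∀ u' ∈ Submodule.span ℂ
        ({(szT φ).mulVec α', (szS V).mulVec ((szT φ).mulVec α')} : Set (V × V → ℂ)),
        dotc u u' = 0) ∧
    -- (3)
    (∀ (ι : Type) [Fintype ι] [DecidableEq ι] (bs : ι → V → ℂ) (ρ : ι → ℂ),
      (∀ i, (szM φ).mulVec (bs i) = ρ i • bs i) →
      (∀ i i', dotc (bs i) (bs i') = if i = i' then 1 else 0) →
      (∀ ψ : V → ℂ, ψ ∈ Submodule.span ℂ (Set.range bs)) →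
      ∀ ψ : V × V → ℂ,
        (∀ i, dotc ((szT φ).mulVec (bs i)) ψ = 0 ∧
              dotc ((szS V).mulVec ((szT φ).mulVec (bs i))) ψ = 0) →
        (szU φ).mulVec ψ = -((szS V).mulVec ψ)) ∧
    -- (4)
    (∀ (α : V → ℂ) (ρ : ℝ),
      (szM φ).mulVec α = (ρ : ℂ) • α → dotc α α = 1 → |ρ| < 1 →
      szVecPlus φ α ρ ≠ 0 ∧ szVecMinus φ α ρ ≠ 0 ∧
      (szU φ).mulVec (szVecPlus φ α ρ)
        = ((ρ : ℂ) + Complex.I * (Real.sqrt (1 - ρ ^ 2) : ℂ)) • szVecPlus φ α ρ ∧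
      (szU φ).mulVec (szVecMinus φ α ρ)
        = ((ρ : ℂ) - Complex.I * (Real.sqrt (1 - ρ ^ 2) : ℂ)) • szVecMinus φ α ρ ∧
      Module.finrank ℂ (Submodule.span ℂ
        ({(szT φ).mulVec α, (szS V).mulVec ((szT φ).mulVec α)} : Set (V × V → ℂ))) = 2) ∧
    -- (5)
    (∀ (α : V → ℂ) (ρ : ℝ),
      (szM φ).mulVec α = (ρ : ℂ) • α → dotc α α = 1 → (ρ = 1 ∨ ρ = -1) →
      (szS V).mulVec ((szT φ).mulVec α) = (ρ : ℂ) • (szT φ).mulVec α ∧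
      Module.finrank ℂ (Submodule.span ℂ
        ({(szT φ).mulVec α, (szS V).mulVec ((szT φ).mulVec α)} : Set (V × V → ℂ))) = 1 ∧
      (szU φ).mulVec ((szT φ).mulVec α) = (ρ : ℂ) • (szT φ).mulVec α) := by
  have hT := szT_conjTranspose_mul_self hφ
  have hS := szS_conjTranspose (V := V)
  have hS2 := szS_mul_self (V := V)
  refine ⟨hT, szegedyWalk_mem_unitaryGroup hT hS hS2, szegedyDiscriminant_isHermitian hS,
    specNorm_szegedyDiscriminant_le_one hT hS hS2, szM_apply φ,
    fun _ _ _ _ _ hα' h _ hu _ hu' => dotc_eq_zero_of_mem_span_szegedy hT hS hS2 hα' h hu hu',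
    fun _ _ _ _ _ _ _ hspan _ hψ =>
      szegedyWalk_mulVec_eq_neg_of_orthogonal hS hspan fun i => (hψ i).2, ?_, ?_⟩
  · intro α ρ hα hn hρ
    have hρ2 : ρ ^ 2 < 1 := (sq_lt_one_iff_abs_lt_one ρ).mpr hρ
    obtain ⟨hx, hy, hxy, hyx⟩ := szegedy_gram hT hS hS2 hα hn
    have hli := linearIndependent_pair_of_dotc hx hy hxy hyx (by exact_mod_cast hρ2.ne)
    have hprod := add_I_mul_sqrt_mul_sub_I_mul_sqrt hρ2.le
    exact ⟨sub_smul_ne_zero_of_linearIndependent hli _,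
      sub_smul_ne_zero_of_linearIndependent hli _,
      szegedyWalk_mulVec_sub_smul hT hS2 hα (by ring) hprod,
      szegedyWalk_mulVec_sub_smul hT hS2 hα (by ring) (by linear_combination hprod),
      finrank_span_pair_eq_two hli⟩
  · intro α ρ hα hn hρ
    obtain ⟨hx, hy, hxy, hyx⟩ := szegedy_gram hT hS hS2 hα hn
    have hST := eq_smul_of_dotc hx hy hxy hyx (by rcases hρ with rfl | rfl <;> norm_num)
    have hTα : (szT φ).mulVec α ≠ 0 := fun h => by simp [h] at hx
    refine ⟨hST, ?_, szegedyWalk_mulVec_mulVec_of_eq_smul hα hST⟩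
    rw [hST]
    exact finrank_span_pair_smul_eq_one hTα _
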